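/- arXiv:1806.09441 — 6 statements merged into one kernel-verified Lean document; each statement's English description precedes it below -/
import Mathlib

section
/- The largest Fibonacci number that is a Cullen number is F_4 = 3; that is, if F_n = m·2^m + 1 for positive integers m, n, then F_n ≤ 3. -/
/-!
For `k ≥ 3`, the only `n < 3 * 2 ^ (k - 1)` with `F n ≡ 1 [MOD 2 ^ k]` are `1`, `2` and
`3 * 2 ^ (k - 1) - 1`. By induction on `k`: for `N = 3 * 2 ^ (k - 1)` the doubling formulas give
`2 ^ (k + 1) ∣ F N` and `F (N + 1) ≡ 2 ^ k + 1 [MOD 2 ^ (k + 1)]`. Hence `F (N - 1)` is not `≡ 1`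
modulo `2 ^ (k + 1)`, and the addition formula `F (N + s + 1) = F N * F s + F (N + 1) * F (s + 1)`
shows that `N + s + 1` is a solution modulo `2 ^ (k + 1)` only if `s + 1` is one modulo `2 ^ k`
other than `1` and `2`, i.e. `s + 1 = N - 1`.

So `F n = m * 2 ^ m + 1` with `m ≥ 4` forces `n ≥ 3 * 2 ^ (m - 1) - 1 ≥ 4 * m + 2`, whence
`F n ≥ 2 ^ (2 * m) > m * 2 ^ m + 1`. For `m ≤ 3` the values `1, 3, 9, 25` are checked directly.
-/

namespace Nat

lemma two_pow_le_fib_two_mul_add_two (k : ℕ) : 2 ^ k ≤ fib (2 * k + 2) := by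
  induction k with
  | zero => simp
  | succ k ih =>
    have hsum := fib_add_two (n := 2 * k + 2)
    have hmono : fib (2 * k + 2) ≤ fib (2 * k + 2 + 1) := fib_le_fib_succ
    rw [show 2 * (k + 1) + 2 = 2 * k + 2 + 2 by ring, pow_succ]
    omega

lemma fib_ne_of_fib_lt_of_lt_fib_succ {a c : ℕ} (hlo : fib a < c) (hhi : c < fib (a + 1))
    (n : ℕ) : fib n ≠ c := by
  rintro rfl
  rcases le_or_gt n a with h | h
  · exact (fib_mono h).not_gt hlo
  · exact (fib_mono h).not_gt hhi

lemma mul_two_pow_add_one_lt_two_pow_two_mul {m : ℕ} (hm : 1 ≤ m) :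
    m * 2 ^ m + 1 < 2 ^ (2 * m) := by
  have hlt : m < 2 ^ m := m.lt_two_pow_self
  have htwo : 2 ≤ 2 ^ m := by
    calc 2 = 2 ^ 1 := rfl
      _ ≤ 2 ^ m := pow_le_pow_right₀ (by norm_num) hm
  calc m * 2 ^ m + 1 < (m + 1) * 2 ^ m := by nlinarith
    _ ≤ 2 ^ m * 2 ^ m := Nat.mul_le_mul_right _ hlt
    _ = 2 ^ (2 * m) := by rw [two_mul, pow_add]

lemma two_pow_add_one_not_modEq_one (k : ℕ) : ¬ 2 ^ k + 1 ≡ 1 [MOD 2 ^ (k + 1)] := by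
  intro h
  have hdvd := (pow_dvd_pow_iff_le_right (by norm_num : 1 < 2)).1 (add_modEq_right_iff.1 h)
  omega

lemma sq_modEq_two_pow_add_one {x k : ℕ} (hk : 2 ≤ k) (h : x ≡ 2 ^ k + 1 [MOD 2 ^ (k + 1)]) :
    x ^ 2 ≡ 2 ^ (k + 1) + 1 [MOD 2 ^ (k + 2)] := by
  obtain ⟨l, rfl⟩ : ∃ l, k = l + 2 := ⟨k - 2, by omega⟩
  rw [modEq_iff_dvd] at h ⊢
  obtain ⟨q, hq⟩ := h
  push_cast at hq ⊢
  exact ⟨-2 ^ l + (2 ^ (l + 2) + 1) * q - 2 ^ (l + 2) * q ^ 2, by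
    linear_combination (x + 2 ^ (l + 2) + 1 - 2 ^ (l + 3) * q) * hq⟩

lemma two_pow_dvd_fib_two_mul {k N : ℕ} (h : 2 ^ (k + 1) ∣ fib N) :
    2 ^ (k + 2) ∣ fib (2 * N) := by
  rw [fib_two_mul, pow_succ]
  exact mul_dvd_mul h
    (Nat.dvd_sub (dvd_mul_right 2 _) ((dvd_pow_self 2 (succ_ne_zero k)).trans h))

lemma fib_two_mul_add_one_modEq {k N : ℕ} (hk : 2 ≤ k) (h₀ : 2 ^ (k + 1) ∣ fib N)
    (h₁ : fib (N + 1) ≡ 2 ^ k + 1 [MOD 2 ^ (k + 1)]) :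
    fib (2 * N + 1) ≡ 2 ^ (k + 1) + 1 [MOD 2 ^ (k + 2)] := by
  have hsq : fib N ^ 2 ≡ 0 [MOD 2 ^ (k + 2)] := by
    refine modEq_zero_iff_dvd.2 (dvd_trans ?_ (pow_dvd_pow_of_dvd h₀ 2))
    rw [← pow_mul]
    exact pow_dvd_pow 2 (by omega)
  rw [fib_two_mul_add_one]
  simpa using (sq_modEq_two_pow_add_one hk h₁).add hsq

lemma fib_three_mul_two_pow_modEq (i : ℕ) :
    2 ^ (i + 3) ∣ fib (3 * 2 ^ (i + 1)) ∧
      fib (3 * 2 ^ (i + 1) + 1) ≡ 2 ^ (i + 2) + 1 [MOD 2 ^ (i + 3)] := by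
  induction i with
  | zero => decide
  | succ i ih =>
    rw [show 3 * 2 ^ (i + 1 + 1) = 2 * (3 * 2 ^ (i + 1)) by ring]
    exact ⟨two_pow_dvd_fib_two_mul ih.1, fib_two_mul_add_one_modEq (by omega) ih.1 ih.2⟩

lemma eq_of_fib_modEq_one_of_lt_two_mul {P k : ℕ} (hP : 2 ^ (k + 1) ∣ fib P)
    (hP₁ : fib (P + 1) ≡ 2 ^ k + 1 [MOD 2 ^ (k + 1)])
    (hbelow : ∀ n < P, fib n ≡ 1 [MOD 2 ^ k] → n = 1 ∨ n = 2 ∨ n = P - 1)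
    {n : ℕ} (hn : n < 2 * P) (h : fib n ≡ 1 [MOD 2 ^ (k + 1)]) :
    n = 1 ∨ n = 2 ∨ n = 2 * P - 1 := by
  have hweak {a b : ℕ} (hab : a ≡ b [MOD 2 ^ (k + 1)]) : a ≡ b [MOD 2 ^ k] :=
    hab.of_mul_right 2
  have hne {a : ℕ} (ha : a ≡ 2 ^ k + 1 [MOD 2 ^ (k + 1)]) : ¬ a ≡ 1 [MOD 2 ^ (k + 1)] :=
    fun ha' => two_pow_add_one_not_modEq_one k (ha.symm.trans ha')
  have hP₀ : fib P ≡ 0 [MOD 2 ^ (k + 1)] := modEq_zero_iff_dvd.2 hP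
  rcases lt_trichotomy n P with hlt | rfl | hgt
  · rcases hbelow n hlt (hweak h) with h1 | h2 | rfl
    · exact Or.inl h1
    · exact Or.inr (Or.inl h2)
    · have hsum : fib (P - 1) + fib P ≡ 2 ^ k + 1 + 0 [MOD 2 ^ (k + 1)] := by
        rw [← fib_add_one (by omega), add_zero]
        exact hP₁
      exact absurd h (hne (hP₀.add_right_cancel hsum))
  · have hdvd := (modEq_iff_dvd' (zero_le 1)).1 (hP₀.symm.trans h)
    simp at hdvd
  · obtain ⟨s, rfl⟩ : ∃ s, n = P + s + 1 := ⟨n - P - 1, by omega⟩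
    have hfib : fib (P + s + 1) ≡ (2 ^ k + 1) * fib (s + 1) [MOD 2 ^ (k + 1)] := by
      rw [fib_add]
      simpa using (hP₀.mul_right (fib s)).add (hP₁.mul_right (fib (s + 1)))
    have hs : fib (s + 1) ≡ 1 [MOD 2 ^ k] := by
      have hred : (2 ^ k + 1) * fib (s + 1) ≡ fib (s + 1) [MOD 2 ^ k] := by
        rw [add_mul, one_mul]
        exact ModEq.modulus_mul_add
      exact hred.symm.trans ((hweak hfib).symm.trans (hweak h))
    rcases hbelow (s + 1) (by omega) hs with h1 | h2 | h3
    · rw [h1, fib_one, mul_one] at hfib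
      exact absurd h (hne hfib)
    · rw [h2, fib_two, mul_one] at hfib
      exact absurd h (hne hfib)
    · omega

lemma eq_of_fib_modEq_one_of_lt (j : ℕ) :
    ∀ n < 3 * 2 ^ (j + 2), fib n ≡ 1 [MOD 2 ^ (j + 3)] →
      n = 1 ∨ n = 2 ∨ n = 3 * 2 ^ (j + 2) - 1 := by
  induction j with
  | zero =>
    intro n hn
    interval_cases n <;> decide
  | succ j ih =>
    intro n hn h
    obtain ⟨hP, hP₁⟩ := fib_three_mul_two_pow_modEq (j + 1)
    rw [show 3 * 2 ^ (j + 1 + 2) = 2 * (3 * 2 ^ (j + 2)) by ring] at hn ⊢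
    exact eq_of_fib_modEq_one_of_lt_two_mul hP hP₁ ih hn h

end Nat

theorem stmt_2_general (m n : ℕ)
    (h : Nat.fib n = m * 2 ^ m + 1) :
    Nat.fib n ≤ 3 := by
  rcases lt_or_ge m 4 with hm | hm
  · interval_cases m
    · simp [h]
    · simp [h]
    · exact absurd h (Nat.fib_ne_of_fib_lt_of_lt_fib_succ (a := 6) (by decide) (by decide) n)
    · exact absurd h (Nat.fib_ne_of_fib_lt_of_lt_fib_succ (a := 8) (by decide) (by decide) n)
  exfalso
  obtain ⟨j, rfl⟩ : ∃ j, m = j + 4 := ⟨m - 4, by omega⟩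
  have hmod : Nat.fib n ≡ 1 [MOD 2 ^ (j + 1 + 3)] := by
    rw [h]
    exact Nat.add_modEq_right_iff.2 (dvd_mul_left _ _)
  have hn : 3 * 2 ^ (j + 1 + 2) - 1 ≤ n := by
    by_contra! hlt
    rcases Nat.eq_of_fib_modEq_one_of_lt (j + 1) n (by omega) hmod with rfl | rfl | rfl
    · simp at h
    · simp at h
    · omega
  have hgrowth : 2 ^ (2 * (j + 4)) ≤ Nat.fib n := by
    refine (Nat.two_pow_le_fib_two_mul_add_two _).trans (Nat.fib_mono ?_)
    have : j < 2 ^ j := j.lt_two_pow_self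
    rw [pow_add] at hn
    omega
  exact absurd (h ▸ hgrowth) (not_le.2 (Nat.mul_two_pow_add_one_lt_two_pow_two_mul (by omega)))

theorem stmt_2 (m n : ℕ) (hm : 1 ≤ m) (hn : 1 ≤ n)
    (h : Nat.fib n = m * 2 ^ m + 1) :
    Nat.fib n ≤ 3 :=
  stmt_2_general m n h
end

section
/- For all integers k ≥ 2, the polynomial ψ_k(x) = x^k − x^{k−1} − ⋯ − x − 1 has exactly one real root α in the interval (2(1 − 2^{−k}), 2). -/
/-!
Since `(x - 1) ψ_k(x) = x^k (x - 2) + 1`, we get `ψ_k(2) = 1`, while at `a = 2(1 - 2^{-k})` the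
right-hand side is `1 - 2(1 - 2^{-k})^k`, which is negative by the strict Bernoulli inequality and
`k 2^{-k} ≤ 1/2`; the intermediate value theorem gives a root in `(a, 2)`. It is the only positive
root: if `ψ_k(x) = 0` and `y = t x` with `t > 1`, then `y^k = t^k ∑ x^i > ∑ t^i x^i = ∑ y^i`.
-/

open Finset

def psi {R : Type*} [CommRing R] (k : ℕ) (x : R) : R := x ^ k - ∑ i ∈ range k, x ^ i

section CommRing

variable {R : Type*} [CommRing R]

lemma psi_mul_sub_one (k : ℕ) (x : R) : psi k x * (x - 1) = x ^ k * (x - 2) + 1 := by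
  rw [psi, sub_mul, geom_sum_mul]
  ring

lemma psi_two (k : ℕ) : psi k (2 : R) = 1 := by
  have h := psi_mul_sub_one k (2 : R)
  rwa [show (2 : R) - 1 = 1 by ring, mul_one, sub_self, mul_zero, zero_add] at h

end CommRing

section OrderedField

variable {R : Type*} [Field R] [LinearOrder R] [IsStrictOrderedRing R]

lemma psi_pos_of_root_lt {k : ℕ} {x y : R} (hx : 0 < x) (hxy : x < y) (hroot : psi k x = 0) :
    0 < psi k y := by
  have hk : k ≠ 0 := by
    rintro rfl
    simp [psi] at hroot
  have ht : 1 < y / x := (one_lt_div hx).2 hxy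
  have hy : y = y / x * x := by field_simp
  have hsum : ∑ i ∈ range k, y ^ i < y ^ k := calc
    ∑ i ∈ range k, y ^ i = ∑ i ∈ range k, (y / x) ^ i * x ^ i := by
      refine sum_congr rfl fun i _ => ?_
      rw [← mul_pow, ← hy]
    _ < ∑ i ∈ range k, (y / x) ^ k * x ^ i := by
      refine sum_lt_sum_of_nonempty (nonempty_range_iff.2 hk) fun i hi => ?_
      exact mul_lt_mul_of_pos_right (pow_lt_pow_right₀ ht (mem_range.1 hi)) (pow_pos hx i)
    _ = (y / x) ^ k * x ^ k := by
      rw [← mul_sum, sub_eq_zero.1 hroot]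
    _ = y ^ k := by rw [← mul_pow, ← hy]
  exact sub_pos.2 hsum

lemma psi_root_unique {k : ℕ} {x y : R} (hx : 0 < x) (hy : 0 < y) (hxroot : psi k x = 0)
    (hyroot : psi k y = 0) : x = y := by
  rcases lt_trichotomy x y with hxy | hxy | hxy
  · exact absurd hyroot (psi_pos_of_root_lt hx hxy hxroot).ne'
  · exact hxy
  · exact absurd hxroot (psi_pos_of_root_lt hy hxy hyroot).ne'

end OrderedField

lemma one_lt_two_mul_one_sub_inv_two_pow_pow {k : ℕ} (hk : 2 ≤ k) :
    1 < 2 * (1 - ((2 : ℝ) ^ k)⁻¹) ^ k := by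
  have hε : ((2 : ℝ) ^ k)⁻¹ ≤ 1 := inv_le_one_of_one_le₀ (one_le_pow₀ one_le_two)
  have hbernoulli : 1 - k * ((2 : ℝ) ^ k)⁻¹ < (1 - ((2 : ℝ) ^ k)⁻¹) ^ k := by
    have := one_add_mul_self_lt_rpow_one_add (s := -((2 : ℝ) ^ k)⁻¹) (by linarith)
      (neg_ne_zero.2 (by positivity)) (p := k) (by exact_mod_cast hk)
    simpa [Real.rpow_natCast, ← sub_eq_add_neg] using this
  have htwo_mul : 2 * (k : ℝ) ≤ 2 ^ k := by
    obtain ⟨m, rfl⟩ : ∃ m, k = m + 1 := ⟨k - 1, by omega⟩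
    have : (m : ℝ) + 1 ≤ 2 ^ m := by exact_mod_cast Nat.lt_two_pow_self
    push_cast
    rw [pow_succ]
    linarith
  have : 2 * (k * ((2 : ℝ) ^ k)⁻¹) ≤ 1 := by
    rw [← mul_assoc, ← div_eq_mul_inv, div_le_one (by positivity)]
    exact htwo_mul
  linarith

lemma psi_neg_two_mul_one_sub_inv_two_pow {k : ℕ} (hk : 2 ≤ k) :
    psi k (2 * (1 - ((2 : ℝ) ^ k)⁻¹)) < 0 := by
  have hbound := one_lt_two_mul_one_sub_inv_two_pow_pow hk
  set ε : ℝ := ((2 : ℝ) ^ k)⁻¹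
  have hε : ε ≤ 4⁻¹ := by
    refine inv_anti₀ (by norm_num) ?_
    calc (4 : ℝ) = 2 ^ 2 := by norm_num
      _ ≤ 2 ^ k := pow_le_pow_right₀ one_le_two hk
  have hvalue : psi k (2 * (1 - ε)) * (2 * (1 - ε) - 1) = 1 - 2 * (1 - ε) ^ k := by
    have hε_mul : ε * 2 ^ k = 1 := inv_mul_cancel₀ (by positivity)
    rw [psi_mul_sub_one, mul_pow]
    linear_combination (-2 * (1 - ε) ^ k) * hε_mul
  have hneg : psi k (2 * (1 - ε)) * (2 * (1 - ε) - 1) < 0 := by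
    rw [hvalue]
    linarith
  exact neg_of_mul_neg_left hneg (by linarith)

theorem stmt_4 (k : ℕ) (hk : 2 ≤ k) :
    ∃! α : ℝ, α ∈ Set.Ioo (2 * (1 - 2 ^ (-(k : ℤ)))) 2 ∧
      α ^ k - ∑ i ∈ Finset.range k, α ^ i = 0 := by
  rw [zpow_neg, zpow_natCast]
  set a : ℝ := 2 * (1 - ((2 : ℝ) ^ k)⁻¹)
  have hpsi_a : psi k a < 0 := psi_neg_two_mul_one_sub_inv_two_pow hk
  have ha_pos : 0 < a := by
    have : ((2 : ℝ) ^ k)⁻¹ < 1 := inv_lt_one_of_one_lt₀ (one_lt_pow₀ one_lt_two (by omega))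
    linarith
  have ha_lt_two : a < 2 := by
    have : (0 : ℝ) < ((2 : ℝ) ^ k)⁻¹ := by positivity
    linarith
  have hcont : Continuous (psi k : ℝ → ℝ) := by
    unfold psi
    fun_prop
  obtain ⟨α, hα, hroot⟩ := intermediate_value_Ioo ha_lt_two.le hcont.continuousOn
    ⟨hpsi_a, (psi_two (R := ℝ) k).symm ▸ one_pos⟩
  exact ⟨α, ⟨hα, hroot⟩, fun β ⟨hβ, hβroot⟩ =>
    psi_root_unique (ha_pos.trans hβ.1) (ha_pos.trans hα.1) hβroot hroot⟩
end

section
/- For all integers k ≥ 2 and n ≥ 1, α^{n−2} ≤ F_n^{(k)} ≤ α^{n−1}, where α is the unique root of x^k − x^{k−1} − ⋯ − x − 1 in the interval (1, 2). -/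
/-!
Both `m ↦ α ^ (m - 1)` and `m ↦ α ^ (m - 2)` satisfy the same `k`-term recurrence as `F`, and
a `k`-term recurrence with nonnegative coefficients preserves `≤` once it holds on `k`
consecutive indices. For the upper bound compare on the initial window `2 - k, …, 1`, where
`F` is `0, …, 0, 1`; for the lower bound compare on `1, …, k`, where `F (j + 2) = 2 ^ j` and
`α < 2`.
-/

open Finset

theorem le_of_initial_le_of_recurrence {M : Type*} [AddCommMonoid M] [PartialOrder M]
    [IsOrderedAddMonoid M] {k : ℕ} {a : ℤ} {f g : ℤ → M}
    (hf : ∀ n, a ≤ n → f (n + k) ≤ ∑ i ∈ range k, f (n + i))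
    (hg : ∀ n, a ≤ n → ∑ i ∈ range k, g (n + i) ≤ g (n + k))
    (hinit : ∀ n, a ≤ n → n < a + k → f n ≤ g n) (n : ℤ) (hn : a ≤ n) : f n ≤ g n := by
  obtain ⟨j, rfl⟩ : ∃ j : ℕ, n = a + j := ⟨(n - a).toNat, by omega⟩
  induction j using Nat.strong_induction_on with
  | _ j ih =>
  by_cases hj : j < k
  · exact hinit _ hn (by omega)
  obtain ⟨m, rfl⟩ : ∃ m : ℕ, j = m + k := ⟨j - k, by omega⟩
  calc f (a + ↑(m + k)) = f (a + m + k) := by push_cast; ring_nf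
    _ ≤ ∑ i ∈ range k, f (a + m + i) := hf _ (by omega)
    _ ≤ ∑ i ∈ range k, g (a + m + i) := sum_le_sum fun i hi => by
        have := ih (m + i) (by have := mem_range.mp hi; omega) (by omega)
        simpa [add_assoc] using this
    _ ≤ g (a + m + k) := hg _ (by omega)
    _ = g (a + ↑(m + k)) := by push_cast; ring_nf

theorem zpow_add_natCast_eq_sum_range {K : Type*} [DivisionRing K] {α : K} (hα : α ≠ 0)
    {k : ℕ} (hroot : α ^ k = ∑ i ∈ range k, α ^ i) (m : ℤ) :
    α ^ (m + k) = ∑ i ∈ range k, α ^ (m + i) := by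
  simp only [zpow_add₀ hα, zpow_natCast, hroot, mul_sum]

section KBonacci

variable {R : Type*} [CommRing R] {k : ℕ} {a : ℤ} {F : ℤ → R}

theorem add_one_add_self_eq_two_mul_of_recurrence
    (hrec : ∀ n, a ≤ n → F (n + k) = ∑ i ∈ range k, F (n + i))
    {n : ℤ} (hn : a ≤ n) : F (n + k + 1) + F n = 2 * F (n + k) := by
  have hshift := sum_range_succ' (fun i : ℕ => F (n + i)) k
  rw [sum_range_succ] at hshift
  simp only [Nat.cast_add, Nat.cast_one, Nat.cast_zero, add_zero, ← add_assoc,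
    add_right_comm n _ 1] at hshift
  rw [add_right_comm, hrec (n + 1) (by omega)]
  linear_combination -hshift - hrec n hn

theorem kbonacci_two (hk : 2 ≤ k) (h0 : ∀ i : ℤ, 2 - (k : ℤ) ≤ i → i ≤ 0 → F i = 0)
    (h1 : F 1 = 1) (hrec : ∀ n : ℤ, 2 - (k : ℤ) ≤ n → F (n + k) = ∑ i ∈ range k, F (n + i)) :
    F 2 = 1 := by
  have h := hrec (2 - k) le_rfl
  rw [sub_add_cancel, sum_eq_single_of_mem (k - 1) (by simp; omega)] at h
  · rwa [show (2 - k + ↑(k - 1) : ℤ) = 1 by omega, h1] at h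
  · intro i hi hik
    simp only [mem_range] at hi
    exact h0 _ (by omega) (by omega)

theorem kbonacci_add_two (h0 : ∀ i : ℤ, 2 - (k : ℤ) ≤ i → i ≤ 0 → F i = 0)
    (h1 : F 1 = 1) (hrec : ∀ n : ℤ, 2 - (k : ℤ) ≤ n → F (n + k) = ∑ i ∈ range k, F (n + i))
    (j : ℕ) (hj : j + 2 ≤ k) : F (j + 2) = 2 ^ j := by
  induction j with
  | zero => simpa using kbonacci_two (by omega) h0 h1 hrec
  | succ j ih =>
    have h := add_one_add_self_eq_two_mul_of_recurrence hrec (n := j + 2 - k) (by omega)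
    rw [show (j : ℤ) + 2 - k + k + 1 = j + 1 + 2 by ring, show (j : ℤ) + 2 - k + k = j + 2 by ring,
      h0 (j + 2 - k) (by omega) (by omega), ih (by omega)] at h
    push_cast
    linear_combination h

end KBonacci

theorem stmt_5 (k : ℕ) (hk : 2 ≤ k) (F : ℤ → ℤ)
    (h0 : ∀ i : ℤ, 2 - (k : ℤ) ≤ i → i ≤ 0 → F i = 0)
    (h1 : F 1 = 1)
    (hrec : ∀ n : ℤ, 2 - (k : ℤ) ≤ n →
      F (n + k) = ∑ i ∈ Finset.range k, F (n + i))
    (α : ℝ) (hα : α ∈ Set.Ioo (1 : ℝ) 2)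
    (hroot : α ^ k = ∑ i ∈ Finset.range k, α ^ i)
    (n : ℕ) (hn : 1 ≤ n) :
    α ^ ((n : ℤ) - 2) ≤ (F n : ℝ) ∧ (F n : ℝ) ≤ α ^ ((n : ℤ) - 1) := by
  obtain ⟨hα1, hα2⟩ := hα
  have hα0 : 0 < α := one_pos.trans hα1
  have hrecℝ (m : ℤ) (hm : 2 - (k : ℤ) ≤ m) :
      (F (m + k) : ℝ) = ∑ i ∈ range k, (F (m + i) : ℝ) := by
    exact_mod_cast hrec m hm
  have hgeom (c m : ℤ) : α ^ (m + k - c) = ∑ i ∈ range k, α ^ (m + i - c) := by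
    simp only [sub_eq_add_neg, add_right_comm _ _ (-c)]
    exact zpow_add_natCast_eq_sum_range hα0.ne' hroot _
  constructor
  · refine le_of_initial_le_of_recurrence (a := 1) (f := fun m => α ^ (m - 2))
      (g := fun m => (F m : ℝ)) (fun m _ => (hgeom 2 m).le) (fun m hm => (hrecℝ m (by omega)).ge)
      ?_ n (by omega)
    intro m hm1 hmk
    rcases hm1.eq_or_lt with rfl | hm2
    · simpa [h1] using inv_le_one_of_one_le₀ hα1.le
    · obtain ⟨j, rfl⟩ : ∃ j : ℕ, m = j + 2 := ⟨(m - 2).toNat, by omega⟩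
      simp only [add_sub_cancel_right, zpow_natCast, kbonacci_add_two h0 h1 hrec j (by omega)]
      push_cast
      exact pow_le_pow_left₀ hα0.le hα2.le j
  · refine le_of_initial_le_of_recurrence (a := 2 - k) (f := fun m => (F m : ℝ))
      (g := fun m => α ^ (m - 1)) (fun m hm => (hrecℝ m hm).le) (fun m _ => (hgeom 1 m).ge)
      ?_ n (by omega)
    intro m hm hmk
    rcases (show m ≤ 0 ∨ m = 1 by omega) with hm0 | rfl
    · simpa [h0 m hm hm0] using (zpow_pos hα0 (m - 1)).le
    · simp [h1]
end

section
/- Let k ≥ 2 and let α be the unique root of x^k − x^{k−1} − ⋯ − x − 1 in (2(1 − 2^{−k}), 2). Then for every integer n with 1 ≤ n − 1 < 2^{k/2}, we have |α^{n−1} − 2^{n−1}| < 2^n / 2^{k/2}. -/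
/-! Write `m = n - 1`. Since `2 - 2 ^ (1 - k) < α < 2`, the mean value bound
`|α ^ m - 2 ^ m| ≤ m 2 ^ (m - 1) |α - 2|` gives `|α ^ m - 2 ^ m| ≤ m 2 ^ m / 2 ^ k`,
and `m < 2 ^ (k / 2)` turns this into `< 2 ^ m / 2 ^ (k / 2)`. -/

open Real

lemma abs_pow_sub_pow_le_of_abs_le {R : Type*} [CommRing R] [LinearOrder R] [IsOrderedRing R]
    {a b : R} (h : |b| ≤ a) (m : ℕ) :
    |b ^ m - a ^ m| ≤ |b - a| * m * a ^ (m - 1) := by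
  have hmax : max |b| |a| = a := by
    rw [abs_of_nonneg ((abs_nonneg b).trans h)]
    exact max_eq_right h
  simpa only [hmax] using abs_pow_sub_pow_le b a m

lemma natCast_mul_pow_pred_mul {R : Type*} [CommSemiring R] (a : R) (m : ℕ) :
    (m : R) * a ^ (m - 1) * a = m * a ^ m := by
  cases m with
  | zero => simp
  | succ m => rw [Nat.add_sub_cancel, mul_assoc, ← pow_succ]

lemma rpow_half_mul_self {x : ℝ} (hx : 0 < x) (y : ℝ) : x ^ (y / 2) * x ^ (y / 2) = x ^ y := by
  rw [← rpow_add hx, add_halves]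

theorem stmt_8_general (k : ℕ) (α : ℝ)
    (hα : α ∈ Set.Ioo (2 * (1 - 2 ^ (-(k : ℤ))) : ℝ) 2)
    (n : ℕ) (hn2 : ((n : ℝ) - 1) < 2 ^ ((k : ℝ) / 2)) :
    |α ^ (n - 1) - 2 ^ (n - 1)| < 2 ^ n / 2 ^ ((k : ℝ) / 2) := by
  obtain ⟨hα_lo, hα_hi⟩ := hα
  set c : ℝ := 2 ^ ((k : ℝ) / 2)
  set m := n - 1
  have hc : 0 < c := by positivity
  have hcc : c * c = 2 ^ k := by rw [rpow_half_mul_self two_pos, rpow_natCast]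
  have hmc : (m : ℝ) < c := by
    rcases n with _ | n
    · simpa [m] using hc
    · simpa [m] using hn2
  have hinv : (2 : ℝ) ^ (-(k : ℤ)) = (2 ^ k)⁻¹ := by rw [zpow_neg, zpow_natCast]
  have hgap : |α - 2| ≤ 2 / 2 ^ k := by
    rw [abs_sub_comm, abs_of_pos (by linarith), div_eq_mul_inv, ← hinv]
    linarith
  have hα_abs : |α| ≤ 2 := by
    have : (2 : ℝ) ^ (-(k : ℤ)) ≤ 1 := zpow_le_one_of_nonpos₀ one_le_two (by omega)
    rw [abs_of_nonneg (by linarith)]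
    exact hα_hi.le
  calc |α ^ m - 2 ^ m| ≤ |α - 2| * m * 2 ^ (m - 1) := abs_pow_sub_pow_le_of_abs_le hα_abs m
    _ ≤ 2 / 2 ^ k * m * 2 ^ (m - 1) := by gcongr
    _ = m * 2 ^ m / (c * c) := by rw [hcc, ← natCast_mul_pow_pred_mul 2 m]; ring
    _ < c * 2 ^ m / (c * c) := by gcongr
    _ = 2 ^ m / c := by field_simp
    _ ≤ 2 ^ n / c := by gcongr; exacts [one_le_two, Nat.sub_le n 1]

theorem stmt_8 (k : ℕ) (hk : 2 ≤ k) (α : ℝ)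
    (hα : α ∈ Set.Ioo (2 * (1 - 2 ^ (-(k : ℤ))) : ℝ) 2)
    (hroot : α ^ k = ∑ i ∈ Finset.range k, α ^ i)
    (n : ℕ) (hn : 1 ≤ n - 1) (hn2 : ((n : ℝ) - 1) < 2 ^ ((k : ℝ) / 2)) :
    |α ^ (n - 1) - 2 ^ (n - 1)| < 2 ^ n / 2 ^ ((k : ℝ) / 2) :=
  stmt_8_general k α hα n hn2
end

section
/- Let k ≥ 2 and define f(x) = (x − 1)/(2 + (k + 1)(x − 2)) for x in [α, 2], where α is the dominant root of x^k − x^{k−1} − ⋯ − x − 1 with 2(1 − 2^{−k}) < α < 2. Then |f(α) − f(2)| < 2k / 2^k. -/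
lemma four_mul_succ_le_three_mul_two_pow {k : ℕ} (hk : 2 ≤ k) : 4 * (k + 1) ≤ 3 * 2 ^ k := by
  induction k, hk using Nat.le_induction with
  | base => norm_num
  | succ n _ ih => rw [pow_succ]; omega

lemma div_linear_sub_half (c x : ℝ) (hd : 2 + c * (x - 2) ≠ 0) :
    (x - 1) / (2 + c * (x - 2)) - 1 / 2 = (c - 2) * (2 - x) / (2 * (2 + c * (x - 2))) := by
  field_simp
  ring

/-- Near `2` the denominator stays above `1/2`, so the difference is at most the numerator. -/
lemma abs_div_linear_sub_half_le {c x : ℝ} (hc : 2 ≤ c) (hx : x ≤ 2) (hcx : c * (2 - x) ≤ 3 / 2) :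
    |(x - 1) / (2 + c * (x - 2)) - 1 / 2| ≤ (c - 2) * (2 - x) := by
  have hd : 1 / 2 ≤ 2 + c * (x - 2) := by linarith
  have hnum : 0 ≤ (c - 2) * (2 - x) := mul_nonneg (by linarith) (by linarith)
  rw [div_linear_sub_half c x (by linarith), abs_of_nonneg (by positivity),
    div_le_iff₀ (by linarith)]
  nlinarith

theorem stmt_9_general (k : ℕ) (hk : 2 ≤ k) (α : ℝ)
    (hα : α ∈ Set.Ioo (2 * (1 - 2 ^ (-(k : ℤ))) : ℝ) 2)
    (f : ℝ → ℝ) (hf : ∀ x, f x = (x - 1) / (2 + (k + 1) * (x - 2))) :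
    |f α - f 2| < 2 * k / 2 ^ k := by
  obtain ⟨hlo, hhi⟩ := hα
  rw [zpow_neg, zpow_natCast] at hlo
  have hgap : 2 - α < 2 / 2 ^ k := by rw [div_eq_mul_inv]; linarith
  have hk' : (2 : ℝ) ≤ k := by exact_mod_cast hk
  have hpow : (4 : ℝ) * (k + 1) ≤ 3 * 2 ^ k := by
    exact_mod_cast four_mul_succ_le_three_mul_two_pow hk
  have hcx : ((k : ℝ) + 1) * (2 - α) ≤ 3 / 2 :=
    calc ((k : ℝ) + 1) * (2 - α) ≤ (k + 1) * (2 / 2 ^ k) := by gcongr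
      _ ≤ 3 / 2 := by rw [mul_div_assoc', div_le_div_iff₀ (by positivity) two_pos]; linarith
  calc |f α - f 2| = |(α - 1) / (2 + (k + 1) * (α - 2)) - 1 / 2| := by rw [hf, hf]; norm_num
    _ ≤ ((k : ℝ) + 1 - 2) * (2 - α) := abs_div_linear_sub_half_le (by linarith) hhi.le hcx
    _ = (k - 1) * (2 - α) := by ring
    _ ≤ (k - 1) * (2 / 2 ^ k) := by gcongr; linarith
    _ < k * (2 / 2 ^ k) := by gcongr; linarith
    _ = 2 * k / 2 ^ k := by ring

theorem stmt_9 (k : ℕ) (hk : 2 ≤ k) (α : ℝ)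
    (hα : α ∈ Set.Ioo (2 * (1 - 2 ^ (-(k : ℤ))) : ℝ) 2)
    (hroot : α ^ k = ∑ i ∈ Finset.range k, α ^ i)
    (f : ℝ → ℝ) (hf : ∀ x, f x = (x - 1) / (2 + (k + 1) * (x - 2))) :
    |f α - f 2| < 2 * k / 2 ^ k :=
  stmt_9_general k hk α hα f hf
end

section
/- If m ≥ 10 and k ≥ 6 are integers and |1 − m·2^{−(n−m−2)}| < 3.2/2^{k/2} for some integer n, then ⌊log m / log 2⌋ + m + 2 ≤ n ≤ ⌊log m / log 2⌋ + m + 3. -/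
/-!
Since `2 ^ (k / 2) ≥ 8`, the hypothesis gives `m / 2 ^ t ∈ (1/2, 3/2)` with `t = n - m - 2`,
so `2 ^ (t - 1) < m < 2 ^ (t + 1)`: the exponent `t` is `⌊log₂ m⌋` or `⌊log₂ m⌋ + 1`.
-/

lemma three_point_two_div_two_rpow_half_le_two_fifths {k : ℝ} (hk : 6 ≤ k) :
    (3.2 : ℝ) / 2 ^ (k / 2) ≤ 2 / 5 := by
  have h8 : (8 : ℝ) ≤ 2 ^ (k / 2) :=
    calc (8 : ℝ) = 2 ^ (3 : ℝ) := by norm_num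
      _ ≤ 2 ^ (k / 2) := Real.rpow_le_rpow_of_exponent_le (by norm_num) (by linarith)
  rw [div_le_iff₀ (by positivity)]
  linarith

lemma Int.log_two_le_and_le_add_one_of_abs_one_sub_mul_zpow_le {x : ℝ} {t : ℤ}
    (h : |1 - x * 2 ^ (-t)| ≤ 1 / 2) : Int.log 2 x ≤ t ∧ t ≤ Int.log 2 x + 1 := by
  have hpos : (0 : ℝ) < 2 ^ t := by positivity
  rw [zpow_neg, ← div_eq_mul_inv, abs_le] at h
  have hlow : 2 ^ t / 2 ≤ x := by
    have := (le_div_iff₀ hpos).mp (by linarith : (1 / 2 : ℝ) ≤ x / 2 ^ t)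
    linarith
  have hhigh : x ≤ 3 / 2 * 2 ^ t := (div_le_iff₀ hpos).mp (by linarith)
  have hx : 0 < x := by linarith
  constructor
  · have : x < (2 : ℕ) ^ (t + 1) := by
      push_cast
      rw [zpow_add_one₀ two_ne_zero]
      linarith
    have := (Int.lt_zpow_iff_log_lt one_lt_two hx).mp this
    omega
  · have : ((2 : ℕ) : ℝ) ^ (t - 1) ≤ x := by
      push_cast
      rw [zpow_sub_one₀ two_ne_zero]
      linarith
    have := (Int.zpow_le_iff_le_log one_lt_two hx).mp this
    omega

lemma Real.floor_log_div_log_two {r : ℝ} (hr : 0 ≤ r) :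
    ⌊Real.log r / Real.log 2⌋ = Int.log 2 r := by
  rw [Real.log_div_log]
  exact_mod_cast Real.floor_logb_natCast (b := 2) hr

theorem stmt_11 (m k n : ℤ) (hm : 10 ≤ m) (hk : 6 ≤ k)
    (h : |1 - (m : ℝ) * 2 ^ (-(n - m - 2))| < 3.2 / 2 ^ ((k : ℝ) / 2)) :
    ⌊Real.log m / Real.log 2⌋ + m + 2 ≤ n ∧ n ≤ ⌊Real.log m / Real.log 2⌋ + m + 3 := by
  have hclose : |1 - (m : ℝ) * 2 ^ (-(n - m - 2))| ≤ 1 / 2 := by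
    have := three_point_two_div_two_rpow_half_le_two_fifths (k := k) (by exact_mod_cast hk)
    linarith
  have := Int.log_two_le_and_le_add_one_of_abs_one_sub_mul_zpow_le hclose
  rw [Real.floor_log_div_log_two (by exact_mod_cast (by omega : 0 ≤ m))]
  omega
end
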